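/- For every integer n ≥ 3 and all real x, y with (n-1)²·y ≥ 2x and 2x ≥ 2 (i.e. x ≥ 1), one has x · ρ(x,y,n) ≤ n² · y · r̃(x,y,n). -/
import Mathlib


/-- The continuous-analogue Pochhammer symbol
`r̃(x,y,n) = Σ_{k=1}^{n} ((n-1)^{2(n-k)} / (2^{n-k} (n-k)!)) x^k y^{n-k}`,
with `r̃(x,y,0) = 1`. -/
noncomputable def rtilde (x y : ℝ) (n : ℕ) : ℝ :=
  if n = 0 then 1 else
    ∑ k ∈ Finset.Icc 1 n,
      ((n : ℝ) - 1) ^ (2 * (n - k)) / (2 ^ (n - k) * (Nat.factorial (n - k) : ℝ))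
        * x ^ k * y ^ (n - k)

/-- `E(x,z) = ∫_0^z x^t / Γ(t+1) dt` (with `x^t` the real power). -/
noncomputable def Efun (x z : ℝ) : ℝ :=
  ∫ t in (0 : ℝ)..z, x ^ t / Real.Gamma (t + 1)

/-- The second continuous analogue of the Pochhammer symbol:
`ρ(x,y,z) = x^z · E(y(z-1)²/(2x), z-1)`. -/
noncomputable def rho (x y z : ℝ) : ℝ :=
  x ^ z * Efun (y * (z - 1) ^ 2 / (2 * x)) (z - 1)


lemma half_le_Gamma {s : ℝ} (h1 : 1 ≤ s) (h2 : s ≤ 2) : (1:ℝ)/2 ≤ Real.Gamma s := by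
  have hs0 : (0:ℝ) < s := by linarith
  have hG : 0 < Real.Gamma s := Real.Gamma_pos_of_pos hs0
  have h3s : (0:ℝ) < 3 - s := by linarith
  set a : ℝ := 1 / (3 - s) with ha
  set b : ℝ := (2 - s) / (3 - s) with hb
  have ha0 : 0 < a := by positivity
  have hb0 : 0 ≤ b := div_nonneg (by linarith) h3s.le
  have hab : a + b = 1 := by rw [ha, hb]; field_simp; ring
  have key := Real.convexOn_log_Gamma.2 (Set.mem_Ioi.mpr hs0)
      (Set.mem_Ioi.mpr (by norm_num : (0:ℝ) < 3)) ha0.le hb0 hab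
  have hpt : a • s + b • (3:ℝ) = 2 := by
    rw [smul_eq_mul, smul_eq_mul, ha, hb]; field_simp; ring
  rw [hpt] at key
  have hG3 : Real.Gamma 3 = 2 := by
    have := Real.Gamma_nat_eq_factorial 2
    norm_num at this
    convert this using 2 <;> norm_num
  simp only [Function.comp, smul_eq_mul, Real.Gamma_two, Real.log_one, hG3] at key
  -- key : 0 ≤ a * log Γ s + b * log 2
  have hba : b = a * (2 - s) := by rw [ha, hb]; field_simp
  have hlog2 : (0:ℝ) ≤ Real.log 2 := Real.log_nonneg (by norm_num)
  have hkey2 : -Real.log 2 ≤ Real.log (Real.Gamma s) := by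
    rw [hba] at key
    nlinarith [mul_le_mul_of_nonneg_right hlog2 (by linarith : (0:ℝ) ≤ s - 1)]
  have : Real.log (1/2) ≤ Real.log (Real.Gamma s) := by
    rw [one_div, Real.log_inv]; exact hkey2
  exact (Real.log_le_log_iff (by norm_num) hG).mp this

lemma fact_half_le_Gamma : ∀ (j : ℕ) (t : ℝ), (j:ℝ) ≤ t → t ≤ (j:ℝ)+1 →
    (Nat.factorial j : ℝ)/2 ≤ Real.Gamma (t+1) := by
  intro j
  induction j with
  | zero =>
    intro t h1 h2
    simp only [Nat.cast_zero] at h1 h2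
    simpa using half_le_Gamma (by linarith) (by linarith)
  | succ j ih =>
    intro t h1 h2
    push_cast at h1 h2
    have ht0 : (0:ℝ) < t := by
      have : (0:ℝ) ≤ (j:ℝ) := Nat.cast_nonneg j
      linarith
    have h := ih (t-1) (by linarith) (by linarith)
    rw [show t - 1 + 1 = t by ring] at h
    have hG : Real.Gamma (t+1) = t * Real.Gamma t := Real.Gamma_add_one (ne_of_gt ht0)
    rw [hG]
    have hfj : (0:ℝ) < (Nat.factorial j : ℝ) := by positivity
    have hGt : 0 < Real.Gamma t := Real.Gamma_pos_of_pos ht0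
    have hstep : ((j:ℝ)+1) * ((Nat.factorial j : ℝ)/2) ≤ t * Real.Gamma t := by
      apply mul_le_mul (by linarith) h (by positivity) (by linarith)
    calc (Nat.factorial (j+1) : ℝ)/2 = ((j:ℝ)+1) * ((Nat.factorial j : ℝ)/2) := by
          rw [Nat.factorial_succ]; push_cast; ring
      _ ≤ t * Real.Gamma t := hstep


lemma rtilde_eq (x y : ℝ) (m : ℕ) (hx : x ≠ 0) (u : ℝ)
    (hu : u = y * (m:ℝ)^2 / (2*x)) :
    rtilde x y (m+1) = ∑ j ∈ Finset.range (m+1), x^(m+1) * u^j / (Nat.factorial j : ℝ) := by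
  rw [rtilde, if_neg (Nat.succ_ne_zero m)]
  refine Finset.sum_nbij' (fun k => m + 1 - k) (fun j => m + 1 - j) ?_ ?_ ?_ ?_ ?_
  · intro k hk
    simp only [Finset.mem_Icc] at hk
    simp only [Finset.mem_range]
    omega
  · intro j hj
    simp only [Finset.mem_range] at hj
    simp only [Finset.mem_Icc]
    omega
  · intro k hk; simp only [Finset.mem_Icc] at hk; omega
  · intro j hj; simp only [Finset.mem_range] at hj; omega
  · intro k hk
    simp only [Finset.mem_Icc] at hk
    set j := m + 1 - k with hj
    have hk' : k = m + 1 - j := by omega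
    have hjm : j ≤ m := by omega
    have hcast : ((m:ℝ) + 1) - 1 = (m:ℝ) := by ring
    rw [show ((m+1 : ℕ):ℝ) = (m:ℝ)+1 by push_cast; ring, hcast]
    -- goal : m^(2*j)/(2^j * j!) * x^k * y^j = x^(m+1) * u^j / j!
    have hxpow : x^(m+1) = x^k * x^j := by
      rw [← pow_add]; congr 1; omega
    rw [hu, div_pow, mul_pow, hxpow]
    have h2x : ((2*x))^j ≠ 0 := pow_ne_zero _ (by intro h; apply hx; linarith [mul_eq_zero.mp h] )
    field_simp
    rw [mul_pow, pow_mul]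
    ring

set_option maxHeartbeats 1600000 in
theorem x_mul_rho_le (n : ℕ) (hn : 3 ≤ n) (x y : ℝ)
    (h1 : ((n : ℝ) - 1) ^ 2 * y ≥ 2 * x) (h2 : 2 * x ≥ 2) :
    x * rho x y (n : ℝ) ≤ (n : ℝ) ^ 2 * y * rtilde x y n := by
  obtain ⟨m, rfl⟩ : ∃ m, n = m + 1 := ⟨n - 1, by omega⟩
  have hm : 2 ≤ m := by omega
  have hm2 : (2:ℝ) ≤ (m:ℝ) := by exact_mod_cast hm
  have hx0 : (0:ℝ) < x := by linarith
  have hcast : ((m+1:ℕ):ℝ) - 1 = (m:ℝ) := by push_cast; ring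
  rw [hcast] at h1
  rw [rho, Efun, hcast]
  set u : ℝ := y * (m:ℝ)^2 / (2*x) with hu
  have hy : 0 < y := by nlinarith
  have hu1 : 1 ≤ u := by rw [hu, le_div_iff₀ (by linarith)]; linarith
  have hu0 : 0 < u := lt_of_lt_of_le one_pos hu1
  -- continuity / integrability
  have hcont : ∀ t : ℝ, 0 ≤ t → ContinuousAt (fun t => u ^ t / Real.Gamma (t+1)) t := by
    intro t ht
    have hG : ContinuousAt Real.Gamma (t+1) := by
      apply (Real.differentiableAt_Gamma ?_).continuousAt
      intro k
      have hk0 : (0:ℝ) ≤ (k:ℝ) := Nat.cast_nonneg k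
      intro hc
      linarith
    have hG2 : ContinuousAt (fun s : ℝ => Real.Gamma (s+1)) t :=
      ContinuousAt.comp (f := fun s : ℝ => s + 1) hG (by fun_prop)
    exact (Real.continuousAt_const_rpow hu0.ne').div hG2
      (ne_of_gt (Real.Gamma_pos_of_pos (by linarith)))
  have hint : ∀ (a b : ℝ), 0 ≤ a → 0 ≤ b →
      IntervalIntegrable (fun t => u ^ t / Real.Gamma (t+1)) MeasureTheory.volume a b := by
    intro a b ha hb
    apply ContinuousOn.intervalIntegrable
    intro t ht
    apply (hcont t ?_).continuousWithinAt
    rcases Set.mem_uIcc.mp ht with ⟨h,_⟩|⟨h,_⟩ <;> linarith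
  have hsplit : ∑ j ∈ Finset.range m, ∫ t in ((j:ℕ):ℝ)..((j+1:ℕ):ℝ), u ^ t / Real.Gamma (t+1)
      = ∫ t in ((0:ℕ):ℝ)..((m:ℕ):ℝ), u ^ t / Real.Gamma (t+1) := by
    apply intervalIntegral.sum_integral_adjacent_intervals (a := fun k : ℕ => (k:ℝ))
    intro k _
    exact hint _ _ (by positivity) (by positivity)
  rw [Nat.cast_zero] at hsplit
  -- per-interval bound
  have hstep : ∀ j ∈ Finset.range m,
      (∫ t in ((j:ℕ):ℝ)..((j+1:ℕ):ℝ), u ^ t / Real.Gamma (t+1))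
        ≤ 2 * u^(j+1) / (Nat.factorial j : ℝ) := by
    intro j _
    have hj1 : ((j:ℕ):ℝ) ≤ ((j+1:ℕ):ℝ) := by push_cast; linarith
    have hb : ∀ t ∈ Set.Icc ((j:ℕ):ℝ) ((j+1:ℕ):ℝ),
        u ^ t / Real.Gamma (t+1) ≤ 2 * u^(j+1) / (Nat.factorial j : ℝ) := by
      intro t ht
      obtain ⟨ht1, ht2⟩ := ht
      push_cast at ht1 ht2
      have hGam := fact_half_le_Gamma j t ht1 ht2
      have hut : u ^ t ≤ u ^ ((j:ℝ)+1) := Real.rpow_le_rpow_of_exponent_le hu1 (by linarith)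
      have hue : u ^ ((j:ℝ)+1) = u ^ (j+1 : ℕ) := by
        rw [← Real.rpow_natCast u (j+1)]; push_cast; ring_nf
      have hfj : (0:ℝ) < (Nat.factorial j:ℝ)/2 := by positivity
      have hd := div_le_div₀ (by positivity) (hue ▸ hut) hfj hGam
      calc u ^ t / Real.Gamma (t+1) ≤ u^(j+1:ℕ) / ((Nat.factorial j:ℝ)/2) := hd
        _ = 2 * u^(j+1) / (Nat.factorial j:ℝ) := by
            rw [div_div_eq_mul_div]; ring
    have hmono := intervalIntegral.integral_mono_on hj1
      (hint _ _ (by positivity) (by positivity)) (intervalIntegrable_const) hb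
    rwa [intervalIntegral.integral_const,
      show (((j+1:ℕ):ℝ) - ((j:ℕ):ℝ)) = 1 by push_cast; ring, one_smul] at hmono
  have hIle : (∫ t in (0:ℝ)..((m:ℕ):ℝ), u ^ t / Real.Gamma (t+1))
      ≤ ∑ j ∈ Finset.range m, 2 * u^(j+1) / (Nat.factorial j:ℝ) := by
    rw [← hsplit]
    exact Finset.sum_le_sum hstep
  have hxp : x ^ (((m+1:ℕ)):ℝ) = x ^ (m+1:ℕ) := Real.rpow_natCast x (m+1)
  rw [hxp, rtilde_eq x y m hx0.ne' u hu]
  have hkey : 2 * x * u = y * (m:ℝ)^2 := by rw [hu]; field_simp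
  calc x * (x ^ (m+1) * ∫ t in (0:ℝ)..((m:ℕ):ℝ), u ^ t / Real.Gamma (t+1))
      ≤ x * (x ^ (m+1) * ∑ j ∈ Finset.range m, 2 * u^(j+1) / (Nat.factorial j:ℝ)) := by
        apply mul_le_mul_of_nonneg_left (mul_le_mul_of_nonneg_left hIle (by positivity)) hx0.le
    _ = ∑ j ∈ Finset.range m, (m:ℝ)^2 * y * (x^(m+1) * u^j / (Nat.factorial j:ℝ)) := by
        rw [Finset.mul_sum, Finset.mul_sum]
        apply Finset.sum_congr rfl
        intro j _
        linear_combination (x^(m+1) * u^j / (Nat.factorial j : ℝ)) * hkey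
    _ ≤ ∑ j ∈ Finset.range m, ((m+1:ℕ):ℝ)^2 * y * (x^(m+1) * u^j / (Nat.factorial j:ℝ)) := by
        apply Finset.sum_le_sum
        intro j _
        apply mul_le_mul_of_nonneg_right _ (by positivity)
        apply mul_le_mul_of_nonneg_right _ hy.le
        have : (m:ℝ) ≤ ((m+1:ℕ):ℝ) := by push_cast; linarith
        nlinarith
    _ ≤ ∑ j ∈ Finset.range (m+1), ((m+1:ℕ):ℝ)^2 * y * (x^(m+1) * u^j / (Nat.factorial j:ℝ)) := by
        apply Finset.sum_le_sum_of_subset_of_nonneg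
          (Finset.range_subset_range.mpr (Nat.le_succ m))
        intro j _ _
        positivity
    _ = ((m+1:ℕ):ℝ)^2 * y * ∑ j ∈ Finset.range (m+1), x^(m+1) * u^j / (Nat.factorial j:ℝ) := by
        rw [Finset.mul_sum]
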